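/- Soundness of source-set exploration: let L be a finite acyclic deterministic LTS satisfying the independence axioms, with initial state s_I and transition relation Γ, and let Γ_r ⊆ Γ define a sub-LTS L_r. Suppose that for every state s reachable from s_I via Γ_r-transitions that is not final in L, the set T_s = { tid(a) : (s, a, s') ∈ Γ_r } is a source set for s in L. Then L_r is sound for L: for every full execution E of L there exists a full execution E' of L, all of whose transitions are in Γ_r, that is equivalent to E. -/
import Mathlib


/-- A labeled transition system over states `S`, actions `A`, and thread ids `T`. -/
structure LTS (S A T : Type) where
  tr : S → A → S → Prop
  tid : A → T

namespace LTS

variable {S A T : Type}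

/-- Determinism: for every state and thread there is at most one outgoing transition
labeled by an action of that thread. -/
def Deterministic (L : LTS S A T) : Prop :=
  ∀ ⦃s a a' s1 s2⦄, L.tr s a s1 → L.tr s a' s2 → L.tid a = L.tid a' → a = a' ∧ s1 = s2

/-- Thread `t` is enabled in state `s`. -/
def Enabled (L : LTS S A T) (s : S) (t : T) : Prop :=
  ∃ a s', L.tr s a s' ∧ L.tid a = t

/-- The set of threads enabled in `s`. -/
def enabledSet (L : LTS S A T) (s : S) : Set T := {t | L.Enabled s t}

/-- A state is final if no thread is enabled in it. -/
def Final (L : LTS S A T) (s : S) : Prop := ∀ t, ¬ L.Enabled s t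

end LTS

/-- Executions of a transition relation `R` from a state: a list of (action, next state)
pairs forming an alternating sequence of states and actions. -/
inductive ExecOf {S A : Type} (R : S → A → S → Prop) : S → List (A × S) → Prop
  | nil (s : S) : ExecOf R s []
  | cons {s : S} {a : A} {s' : S} {E : List (A × S)} :
      R s a s' → ExecOf R s' E → ExecOf R s ((a, s') :: E)

/-- Executions of the LTS `L` from a state. -/
def LTS.IsExec {S A T : Type} (L : LTS S A T) : S → List (A × S) → Prop := ExecOf L.tr

/-- The state in which an execution from `s` ends. -/
def endState {S A : Type} (s : S) (E : List (A × S)) : S := (E.map Prod.snd).getLastD s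

/-- `ind` is an independence relation for `L`: symmetric, and independent actions have
distinct thread ids. -/
def IndepRel {S A T : Type} (L : LTS S A T) (ind : A → A → Prop) : Prop :=
  (∀ a a', ind a a' → ind a' a) ∧ (∀ a a', ind a a' → L.tid a ≠ L.tid a')

/-- Commutation axiom: consecutive independent transitions can be swapped,
reaching the same state. -/
def Commutation {S A T : Type} (L : LTS S A T) (ind : A → A → Prop) : Prop :=
  ∀ a a' s s1 s2, ind a a' → L.tr s a s1 → L.tr s1 a' s2 →
    ∃ s1', L.tr s a' s1' ∧ L.tr s1' a s2

/-- Enabledness preservation axiom: executing a transition independent of the transition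
of another enabled thread keeps that thread enabled with the same action. -/
def EnabledPreserved {S A T : Type} (L : LTS S A T) (ind : A → A → Prop) : Prop :=
  ∀ s a s1 a' s1', L.tr s a s1 → L.tr s a' s1' → L.tid a ≠ L.tid a' → ind a a' →
    ∃ s2, L.tr s1 a' s2

/-- An action is invisible if it is independent of every action of every other thread. -/
def Invisible {S A T : Type} (L : LTS S A T) (ind : A → A → Prop) (a : A) : Prop :=
  ∀ a', L.tid a' ≠ L.tid a → ind a a'

/-- A single swap of two consecutive transitions labeled by independent actions,
both sides being executions from `s`. -/
inductive SwapExec {S A T : Type} (L : LTS S A T) (ind : A → A → Prop) (s : S) :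
    List (A × S) → List (A × S) → Prop
  | swap (u v : List (A × S)) (a a' : A) (x y x' : S) :
      ind a a' →
      L.IsExec s (u ++ (a, x) :: (a', y) :: v) →
      L.IsExec s (u ++ (a', x') :: (a, y) :: v) →
      SwapExec L ind s (u ++ (a, x) :: (a', y) :: v) (u ++ (a', x') :: (a, y) :: v)

/-- The smallest equivalence relation containing `r`. -/
inductive EqvClosure {α : Type} (r : α → α → Prop) : α → α → Prop
  | rel {x y : α} : r x y → EqvClosure r x y
  | refl (x : α) : EqvClosure r x x
  | symm {x y : α} : EqvClosure r x y → EqvClosure r y x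
  | trans {x y z : α} : EqvClosure r x y → EqvClosure r y z → EqvClosure r x z

/-- Two executions from `s` are equivalent if one is obtained from the other by a finite
sequence of swaps of consecutive independent transitions. -/
def ExecEquiv {S A T : Type} (L : LTS S A T) (ind : A → A → Prop) (s : S) :
    List (A × S) → List (A × S) → Prop :=
  EqvClosure (SwapExec L ind s)

/-- Thread `t` is a weak initial of execution `E` from `s`: some equivalent execution
starts with a transition of `t`. -/
def WeakInitial {S A T : Type} (L : LTS S A T) (ind : A → A → Prop) (s : S)
    (E : List (A × S)) (t : T) : Prop :=
  ∃ E', L.IsExec s E' ∧ ExecEquiv L ind s E E' ∧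
    ∃ p rest, E' = p :: rest ∧ L.tid p.1 = t

/-- `Q` is a source set for `s`: every nonempty execution from `s` ending in a final
state has a weak initial thread in `Q`. -/
def IsSourceSet {S A T : Type} (L : LTS S A T) (ind : A → A → Prop) (s : S)
    (Q : Set T) : Prop :=
  ∀ E, L.IsExec s E → E ≠ [] → L.Final (endState s E) →
    ∃ t ∈ Q, WeakInitial L ind s E t

/-- `P ⊆ enabled(s)` is a persistent set for `s`: in every execution from `s` whose
actions all have thread ids outside `P`, every action is independent of the action of
`next(s, t)` for every `t ∈ P`. -/
def IsPersistentSet {S A T : Type} (L : LTS S A T) (ind : A → A → Prop) (s : S)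
    (P : Set T) : Prop :=
  (∀ t ∈ P, L.Enabled s t) ∧
  ∀ E, L.IsExec s E → (∀ p ∈ E, L.tid p.1 ∉ P) →
    ∀ p ∈ E, ∀ t ∈ P, ∀ a s', L.tr s a s' → L.tid a = t → ind p.1 a

/-- Acyclicity: no execution visits the same state twice. -/
def Acyclic {S A T : Type} (L : LTS S A T) : Prop :=
  ∀ s E, L.IsExec s E → (s :: E.map Prod.snd).Nodup

/-- `s'` is reachable from `s` via transitions of the relation `R`. -/
def ReachableVia {S A : Type} (R : S → A → S → Prop) (s s' : S) : Prop :=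
  ∃ E, ExecOf R s E ∧ endState s E = s'

section Aux

variable {S A T : Type}

lemma endState_nil (s : S) : endState (A := A) s [] = s := rfl

lemma endState_cons (s : S) (a : A) (s' : S) (E : List (A × S)) :
    endState s ((a, s') :: E) = endState s' E := by
  simp only [endState, List.map_cons, List.getLastD_cons]

lemma endState_append (s : S) (u E : List (A × S)) :
    endState s (u ++ E) = endState (endState s u) E := by
  induction u generalizing s with
  | nil => rfl
  | cons p u ih =>
    obtain ⟨a, x⟩ := p
    simp only [List.cons_append, endState_cons]
    exact ih x

lemma swapExec_endState {L : LTS S A T} {ind : A → A → Prop} {s : S}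
    {E1 E2 : List (A × S)} (h : SwapExec L ind s E1 E2) :
    endState s E1 = endState s E2 := by
  cases h with
  | swap u v a a' x y x' hind h1 h2 =>
    rw [endState_append, endState_append, endState_cons, endState_cons,
      endState_cons, endState_cons]

lemma swapExec_length {L : LTS S A T} {ind : A → A → Prop} {s : S}
    {E1 E2 : List (A × S)} (h : SwapExec L ind s E1 E2) :
    E1.length = E2.length := by
  cases h with
  | swap u v a a' x y x' hind h1 h2 => simp

lemma execEquiv_endState {L : LTS S A T} {ind : A → A → Prop} {s : S}
    {E1 E2 : List (A × S)} (h : ExecEquiv L ind s E1 E2) :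
    endState s E1 = endState s E2 := by
  induction h with
  | rel h => exact swapExec_endState h
  | refl => rfl
  | symm _ ih => exact ih.symm
  | trans _ _ ih1 ih2 => exact ih1.trans ih2

lemma execEquiv_length {L : LTS S A T} {ind : A → A → Prop} {s : S}
    {E1 E2 : List (A × S)} (h : ExecEquiv L ind s E1 E2) :
    E1.length = E2.length := by
  induction h with
  | rel h => exact swapExec_length h
  | refl => rfl
  | symm _ ih => exact ih.symm
  | trans _ _ ih1 ih2 => exact ih1.trans ih2

lemma execEquiv_cons (L : LTS S A T) (ind : A → A → Prop) {s : S} {a : A} {s' : S}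
    (htr : L.tr s a s') {E1 E2 : List (A × S)}
    (heq : ExecEquiv L ind s' E1 E2) :
    ExecEquiv L ind s ((a, s') :: E1) ((a, s') :: E2) := by
  induction heq with
  | rel h =>
    cases h with
    | swap u v a1 a2 x y x' hind h1 h2 =>
      exact EqvClosure.rel
        (SwapExec.swap ((a, s') :: u) v a1 a2 x y x' hind
          (ExecOf.cons htr h1) (ExecOf.cons htr h2))
  | refl => exact EqvClosure.refl _
  | symm _ ih => exact ih.symm
  | trans _ _ ih1 ih2 => exact ih1.trans ih2

lemma execOf_append {R : S → A → S → Prop} {s : S} {E : List (A × S)}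
    (h : ExecOf R s E) {a : A} {s' : S} (h2 : R (endState s E) a s') :
    ExecOf R s (E ++ [(a, s')]) := by
  induction h with
  | nil s0 => exact ExecOf.cons h2 (ExecOf.nil _)
  | cons htr hE ih =>
    rename_i s0 a0 s1 E0
    rw [endState_cons] at h2
    exact ExecOf.cons htr (ih h2)

lemma main_sourceSet {L : LTS S A T} {ind : A → A → Prop}
    (hdet : L.Deterministic)
    {sI : S} {Γr : S → A → S → Prop}
    (hsub : ∀ s a s', Γr s a s' → L.tr s a s')
    (hsrc : ∀ s, ReachableVia Γr sI s → ¬ L.Final s →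
      IsSourceSet L ind s {t | ∃ a s', Γr s a s' ∧ L.tid a = t}) :
    ∀ n (s : S) (E : List (A × S)), ReachableVia Γr sI s → E.length ≤ n →
      L.IsExec s E → L.Final (endState s E) →
      ∃ E', ExecOf Γr s E' ∧ L.IsExec s E' ∧ L.Final (endState s E') ∧
        ExecEquiv L ind s E E' := by
  intro n
  induction n with
  | zero =>
    intro s E _ hlen hexec hfin
    have hE : E = [] := List.length_eq_zero_iff.mp (Nat.le_zero.mp hlen)
    subst hE
    exact ⟨[], ExecOf.nil s, ExecOf.nil s, hfin, EqvClosure.refl _⟩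
  | succ n ih =>
    intro s E hreach hlen hexec hfin
    by_cases hE : E = []
    · subst hE
      exact ⟨[], ExecOf.nil s, ExecOf.nil s, hfin, EqvClosure.refl _⟩
    · have hnotfin : ¬ L.Final s := by
        cases hexec with
        | nil => exact absurd rfl hE
        | cons htr _ =>
          intro hf
          exact hf _ ⟨_, _, htr, rfl⟩
      obtain ⟨t, ht, E', hexecE', heqv, p, rest, rfl, htid⟩ :=
        hsrc s hreach hnotfin E hexec hE hfin
      obtain ⟨a0, s0, hΓr, htid0⟩ := ht
      obtain ⟨a1, s1⟩ := p
      cases hexecE' with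
      | cons htr hrest =>
        obtain ⟨rfl, rfl⟩ :=
          hdet (hsub _ _ _ hΓr) htr (htid0.trans htid.symm)
        -- now Γr s a0 s0, tr s a0 s0, hrest : IsExec s0 rest
        have hend : endState s E = endState s0 rest := by
          rw [execEquiv_endState heqv, endState_cons]
        have hfinrest : L.Final (endState s0 rest) := hend ▸ hfin
        have hlenrest : rest.length ≤ n := by
          have := execEquiv_length heqv
          simp only [List.length_cons] at this
          omega
        have hreach' : ReachableVia Γr sI s0 := by
          obtain ⟨E0, hE0, hend0⟩ := hreach
          refine ⟨E0 ++ [(a0, s0)], execOf_append hE0 (hend0 ▸ hΓr), ?_⟩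
          rw [endState_append, hend0, endState_cons, endState_nil]
        obtain ⟨E'', hΓE, hexE, hfinE, heqvE⟩ :=
          ih s0 rest hreach' hlenrest hrest hfinrest
        refine ⟨(a0, s0) :: E'', ExecOf.cons hΓr hΓE, ExecOf.cons htr hexE, ?_,
          EqvClosure.trans heqv (execEquiv_cons L ind htr heqvE)⟩
        rw [endState_cons]
        exact hfinE

end Aux

/-- Soundness of source-set exploration: if every non-final state
reachable via the sub-relation `Γr ⊆ Γ` is expanded (in `Γr`) according to a source
set, then every full execution of `L` is equivalent to a full execution of `L` all of
whose transitions are in `Γr`. -/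
theorem sourceSet_exploration_sound {S A T : Type} [Finite S]
    (L : LTS S A T) (ind : A → A → Prop)
    (hdet : L.Deterministic) (hind : IndepRel L ind)
    (hcomm : Commutation L ind) (hen : EnabledPreserved L ind)
    (hacyc : Acyclic L)
    (sI : S) (Γr : S → A → S → Prop)
    (hsub : ∀ s a s', Γr s a s' → L.tr s a s')
    (hsrc : ∀ s, ReachableVia Γr sI s → ¬ L.Final s →
      IsSourceSet L ind s {t | ∃ a s', Γr s a s' ∧ L.tid a = t})
    (E : List (A × S)) (hE : L.IsExec sI E) (hfin : L.Final (endState sI E)) :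
    ∃ E', ExecOf Γr sI E' ∧ L.IsExec sI E' ∧ L.Final (endState sI E') ∧
      ExecEquiv L ind sI E E' :=
  main_sourceSet hdet hsub hsrc E.length sI E
    ⟨[], ExecOf.nil sI, rfl⟩ le_rfl hE hfin
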